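/- arXiv:1010.4108 — 4 statements merged into one kernel-verified Lean document; each statement's English description precedes it below -/
import Mathlib

section
/- Let b ∈ (0, 1/2] and γ ∈ (0, 1). If G has a b-balanced cut S with conductance φ(S) ≤ γ, then there exists x : V → ℝ such that, with x̄ = Σ_{i∈V} μ_i x_i: (1/m)·Σ_{{i,j}∈E} (x_i − x_j)² ≤ 4γ, Σ_{i∈V} μ_i (x_i − x̄)² = 1, and (x_i − x̄)² ≤ (1−b)/b for every i ∈ V. In particular the SDP relaxation psdp(G, b, γ) is feasible. -/
open Finset

/-- Number of edges of `G` with exactly one endpoint in `S` (each such edge counted once). -/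
def cutSize {n : ℕ} (G : SimpleGraph (Fin n)) [DecidableRel G.Adj] (S : Finset (Fin n)) : ℕ :=
  ∑ i ∈ S, ∑ j ∈ Sᶜ, if G.Adj i j then 1 else 0

/-- Volume of a vertex subset: the sum of the degrees of its vertices. -/
def vol {n : ℕ} (G : SimpleGraph (Fin n)) [DecidableRel G.Adj] (S : Finset (Fin n)) : ℕ :=
  ∑ i ∈ S, G.degree i

/-- Conductance `φ(S) = |E(S,S̄)| / min(vol(S), vol(S̄))`. -/
noncomputable def conductance {n : ℕ} (G : SimpleGraph (Fin n)) [DecidableRel G.Adj]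
    (S : Finset (Fin n)) : ℝ :=
  (cutSize G S : ℝ) / min (vol G S : ℝ) (vol G Sᶜ : ℝ)

/-- Sum of a symmetric function over the edges `{i,j} ∈ E` of `G` (each edge counted once). -/
noncomputable def edgeSum {n : ℕ} (G : SimpleGraph (Fin n)) [DecidableRel G.Adj]
    (f : Fin n → Fin n → ℝ) : ℝ :=
  (∑ i, ∑ j, if G.Adj i j then f i j else 0) / 2

/-!
Let `p = μ(S)` and `q = μ(Sᶜ)`, so `p + q = 1` and `p, q ≥ b` by balance. Take the indicator of
`S`, centred and scaled to unit variance: it equals `√(q/p)` on `S` and `-√(p/q)` off `S`. Only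
cut edges contribute to its energy, each with `(√(q/p) + √(p/q))² = 1/(pq)`, so the energy is
`|E(S,Sᶜ)|/(pq) ≤ 2mγ·min(p,q)/(pq) = 2mγ/max(p,q) ≤ 4mγ`. Its squared values `q/p = (1-p)/p`
and `p/q = (1-q)/q` are at most `(1-b)/b` because `p, q ≥ b`.
-/

lemma sum_mul_ite_mem {ι : Type*} [Fintype ι] [DecidableEq ι] (w : ι → ℝ) (S : Finset ι)
    (a c : ℝ) :
    ∑ i, w i * (if i ∈ S then a else c) = (∑ i ∈ S, w i) * a + (∑ i ∈ Sᶜ, w i) * c := by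
  rw [← sum_add_sum_compl S, sum_mul, sum_mul]
  congr 1 <;> refine sum_congr rfl fun i hi => ?_ <;> simp_all

lemma one_sub_div_le_one_sub_div_of_le {b p : ℝ} (hb : 0 < b) (hbp : b ≤ p) :
    (1 - p) / p ≤ (1 - b) / b := by
  rw [div_le_div_iff₀ (hb.trans_le hbp) hb]
  nlinarith

lemma min_le_two_mul_mul {p q : ℝ} (hp : 0 ≤ p) (hq : 0 ≤ q) (hpq : p + q = 1) :
    min p q ≤ 2 * (p * q) := by
  rcases le_total p q with h | h
  · rw [min_eq_left h]; nlinarith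
  · rw [min_eq_right h]; nlinarith

section CutEmbedding

variable {ι : Type*} [DecidableEq ι] (S : Finset ι) {p q : ℝ}

noncomputable def cutEmbedding (p q : ℝ) (i : ι) : ℝ :=
  if i ∈ S then √q / √p else -(√p / √q)

lemma sum_mul_cutEmbedding [Fintype ι] {w : ι → ℝ} (hwS : ∑ i ∈ S, w i = p)
    (hwSc : ∑ i ∈ Sᶜ, w i = q) (hp : 0 < p) (hq : 0 < q) : ∑ i, w i * cutEmbedding S p q i = 0 := by
  have hsp := Real.sqrt_pos.2 hp
  have hsq := Real.sqrt_pos.2 hq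
  simp only [cutEmbedding, sum_mul_ite_mem, hwS, hwSc]
  field_simp
  rw [Real.sq_sqrt hp.le, Real.sq_sqrt hq.le]
  ring

lemma sum_mul_cutEmbedding_sq [Fintype ι] {w : ι → ℝ} (hwS : ∑ i ∈ S, w i = p)
    (hwSc : ∑ i ∈ Sᶜ, w i = q) (hp : 0 < p) (hq : 0 < q) (hpq : p + q = 1) :
    ∑ i, w i * cutEmbedding S p q i ^ 2 = 1 := by
  simp only [cutEmbedding, ite_pow, sum_mul_ite_mem, hwS, hwSc]
  rw [neg_sq, div_pow, div_pow, Real.sq_sqrt hp.le, Real.sq_sqrt hq.le]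
  field_simp
  linarith

lemma cutEmbedding_sq_le {b : ℝ} (hb : 0 < b) (hbp : b ≤ p) (hbq : b ≤ q) (hpq : p + q = 1)
    (i : ι) : cutEmbedding S p q i ^ 2 ≤ (1 - b) / b := by
  have hp := hb.trans_le hbp
  have hq := hb.trans_le hbq
  rw [cutEmbedding]
  split_ifs
  · rw [div_pow, Real.sq_sqrt hp.le, Real.sq_sqrt hq.le, eq_sub_of_add_eq' hpq]
    exact one_sub_div_le_one_sub_div_of_le hb hbp
  · rw [neg_sq, div_pow, Real.sq_sqrt hp.le, Real.sq_sqrt hq.le, eq_sub_of_add_eq hpq]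
    exact one_sub_div_le_one_sub_div_of_le hb hbq

lemma sqrt_div_sqrt_add_sqrt_div_sqrt_sq (hp : 0 < p) (hq : 0 < q) (hpq : p + q = 1) :
    (√q / √p + √p / √q) ^ 2 = 1 / (p * q) := by
  have hsp := Real.sqrt_pos.2 hp
  have hsq := Real.sqrt_pos.2 hq
  rw [div_add_div _ _ hsp.ne' hsq.ne', div_pow, ← sq, ← sq,
    Real.sq_sqrt hp.le, Real.sq_sqrt hq.le, add_comm, hpq, mul_pow,
    Real.sq_sqrt hp.le, Real.sq_sqrt hq.le, one_pow]

end CutEmbedding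

section Graph

variable {n : ℕ} (G : SimpleGraph (Fin n)) [DecidableRel G.Adj]

lemma vol_univ : vol G univ = 2 * #G.edgeFinset :=
  G.sum_degrees_eq_twice_card_edges

lemma vol_add_vol_compl (S : Finset (Fin n)) : vol G S + vol G Sᶜ = vol G univ :=
  sum_add_sum_compl S _

lemma sum_eq_vol_div {μ : Fin n → ℝ} {c : ℝ} (hμ : ∀ i, μ i = G.degree i / c)
    (S : Finset (Fin n)) : ∑ i ∈ S, μ i = vol G S / c := by
  simp only [hμ, ← sum_div, vol, Nat.cast_sum]

lemma conductance_nonneg (S : Finset (Fin n)) : 0 ≤ conductance G S :=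
  div_nonneg (Nat.cast_nonneg _) (le_min (Nat.cast_nonneg _) (Nat.cast_nonneg _))

lemma edgeSum_sq_sub_ite_mem (S : Finset (Fin n)) (a c : ℝ) :
    edgeSum G (fun i j => ((if i ∈ S then a else c) - (if j ∈ S then a else c)) ^ 2)
      = (a - c) ^ 2 * cutSize G S := by
  set x : Fin n → ℝ := fun i => if i ∈ S then a else c
  have row_mem : ∀ i ∈ S, ∑ j, (if G.Adj i j then (x i - x j) ^ 2 else 0)
      = (a - c) ^ 2 * ∑ j ∈ Sᶜ, if G.Adj i j then 1 else 0 := by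
    intro i hi
    rw [← sum_add_sum_compl S, sum_eq_zero fun j hj => by simp [x, hi, hj], zero_add, mul_sum]
    exact sum_congr rfl fun j hj => by simp [x, hi, mem_compl.1 hj]
  have row_not_mem : ∀ i ∈ Sᶜ, ∑ j, (if G.Adj i j then (x i - x j) ^ 2 else 0)
      = (a - c) ^ 2 * ∑ j ∈ S, if G.Adj i j then 1 else 0 := by
    intro i hi
    rw [← sum_add_sum_compl S, sum_eq_zero (s := Sᶜ) fun j hj => by
      simp [x, mem_compl.1 hi, mem_compl.1 hj], add_zero, mul_sum]
    exact sum_congr rfl fun j hj => by simp [x, mem_compl.1 hi, hj, sub_sq_comm c]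
  have cut_symm : (∑ i ∈ Sᶜ, ∑ j ∈ S, if G.Adj i j then (1 : ℝ) else 0) =
      ∑ i ∈ S, ∑ j ∈ Sᶜ, if G.Adj i j then (1 : ℝ) else 0 := by
    rw [sum_comm]
    simp only [G.adj_comm]
  rw [edgeSum, ← sum_add_sum_compl S, sum_congr rfl row_mem, sum_congr rfl row_not_mem,
    ← mul_sum, ← mul_sum, cut_symm, cutSize]
  push_cast
  ring

lemma edgeSum_cutEmbedding (S : Finset (Fin n)) {p q : ℝ} (hp : 0 < p) (hq : 0 < q)
    (hpq : p + q = 1) :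
    edgeSum G (fun i j => (cutEmbedding S p q i - cutEmbedding S p q j) ^ 2)
      = cutSize G S / (p * q) := by
  simp only [cutEmbedding, edgeSum_sq_sub_ite_mem, sub_neg_eq_add,
    sqrt_div_sqrt_add_sqrt_div_sqrt_sq hp hq hpq, one_div_mul_eq_div]

end Graph

theorem sdp_is_relaxation_general {n : ℕ} (G : SimpleGraph (Fin n)) [DecidableRel G.Adj]
    (m : ℕ) (hm : m = G.edgeFinset.card) (hm1 : 1 ≤ m)
    (μ : Fin n → ℝ) (hμ : ∀ i, μ i = (G.degree i : ℝ) / (2 * m))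
    (b γ : ℝ) (hb : 0 < b)
    (S : Finset (Fin n))
    (hbal : b * (vol G Finset.univ : ℝ) ≤ min (vol G S : ℝ) (vol G Sᶜ : ℝ))
    (hcond : conductance G S ≤ γ) :
    ∃ x : Fin n → ℝ,
      (1 / (m : ℝ)) * edgeSum G (fun i j => (x i - x j) ^ 2) ≤ 4 * γ ∧
      ∑ i, μ i * (x i - ∑ j, μ j * x j) ^ 2 = 1 ∧
      ∀ i, (x i - ∑ j, μ j * x j) ^ 2 ≤ (1 - b) / b := by
  have hm0 : (0 : ℝ) < m := by exact_mod_cast hm1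
  have hvol : (vol G univ : ℝ) = 2 * m := by rw [vol_univ, ← hm]; push_cast; rfl
  set p := ∑ i ∈ S, μ i with hp
  set q := ∑ i ∈ Sᶜ, μ i with hq
  rw [sum_eq_vol_div G hμ] at hp hq
  have hpq : p + q = 1 := by
    rw [hp, hq, ← add_div, ← Nat.cast_add, vol_add_vol_compl, hvol, div_self (by positivity)]
  have hmin : min (vol G S : ℝ) (vol G Sᶜ) = 2 * m * min p q := by
    rw [mul_min_of_nonneg _ _ (by positivity), hp, hq, mul_div_cancel₀ _ (by positivity),
      mul_div_cancel₀ _ (by positivity)]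
  obtain ⟨hbp, hbq⟩ : b ≤ p ∧ b ≤ q := by
    rw [← le_min_iff, ← mul_le_mul_iff_of_pos_left (by positivity : (0 : ℝ) < 2 * m), ← hmin,
      mul_comm, ← hvol]
    exact hbal
  have hp0 : 0 < p := hb.trans_le hbp
  have hq0 : 0 < q := hb.trans_le hbq
  have hcut : (cutSize G S : ℝ) ≤ γ * (2 * m * min p q) :=
    hmin ▸ (div_le_iff₀ (hmin ▸ mul_pos (by positivity) (lt_min hp0 hq0))).1 hcond
  have hγ : 0 ≤ γ := (conductance_nonneg G S).trans hcond
  have hmean : ∑ j, μ j * cutEmbedding S p q j = 0 := sum_mul_cutEmbedding S rfl rfl hp0 hq0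
  refine ⟨cutEmbedding S p q, ?_, ?_, fun i => ?_⟩
  · rw [edgeSum_cutEmbedding G S hp0 hq0 hpq]
    calc 1 / (m : ℝ) * (cutSize G S / (p * q))
        ≤ 1 / m * (γ * (2 * m * (2 * (p * q))) / (p * q)) := by
          gcongr
          exact hcut.trans (by gcongr; exact min_le_two_mul_mul hp0.le hq0.le hpq)
      _ = 4 * γ := by field_simp; ring
  · simp only [hmean, sub_zero]
    exact sum_mul_cutEmbedding_sq S rfl rfl hp0 hq0 hpq
  · rw [hmean, sub_zero]
    exact cutEmbedding_sq_le S hb hbp hbq hpq i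

/-- **Lemma 2.1 (SDP is a Relaxation).** If `G` has a `b`-balanced cut `S` of conductance
at most `γ`, then the SDP relaxation `psdp(G, b, γ)` is feasible: there is a
(one-dimensional) embedding `x : V → ℝ` with mean `x̄ = ∑ μ_i x_i` such that
`(1/m)·∑_{{i,j}∈E}(x_i−x_j)² ≤ 4γ`, `∑ μ_i (x_i−x̄)² = 1`, and
`(x_i−x̄)² ≤ (1−b)/b` for all `i`. -/
theorem sdp_is_relaxation {n : ℕ} (G : SimpleGraph (Fin n)) [DecidableRel G.Adj]
    (m : ℕ) (hm : m = G.edgeFinset.card) (hm1 : 1 ≤ m)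
    (hdeg : ∀ i, 0 < G.degree i)
    (μ : Fin n → ℝ) (hμ : ∀ i, μ i = (G.degree i : ℝ) / (2 * m))
    (b γ : ℝ) (hb : 0 < b) (hb2 : b ≤ 1 / 2) (hγ0 : 0 < γ) (hγ1 : γ < 1)
    (S : Finset (Fin n))
    (hbal : b * (vol G Finset.univ : ℝ) ≤ min (vol G S : ℝ) (vol G Sᶜ : ℝ))
    (hcond : conductance G S ≤ γ) :
    ∃ x : Fin n → ℝ,
      (1 / (m : ℝ)) * edgeSum G (fun i j => (x i - x j) ^ 2) ≤ 4 * γ ∧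
      ∑ i, μ i * (x i - ∑ j, μ j * x j) ^ 2 = 1 ∧
      ∀ i, (x i - ∑ j, μ j * x j) ^ 2 ≤ (1 - b) / b :=
  sdp_is_relaxation_general G m hm hm1 μ hμ b γ hb S hbal hcond
end

section
/- Let n ≥ 2, let D = diag(d_1, …, d_n) with all d_i > 0 and Σ_i d_i = 2m, let μ_i = d_i/(2m), L(K_V) = diag(μ) − μμᵀ, and 𝓘 = I_n − (1/(2m))·D^{1/2} 1 1ᵀ D^{1/2}. For ε > 0 and any symmetric matrix M ∈ ℝ^{n×n}, define U_ε(M) = 2m · D^{−1/2} exp(−2mε · D^{−1/2} M D^{−1/2}) D^{−1/2} / (𝓘 • exp(−2mε · D^{−1/2} M D^{−1/2})). Then the denominator 𝓘 • exp(−2mε·D^{−1/2} M D^{−1/2}) is strictly positive, U_ε(M) is positive semidefinite, and L(K_V) • U_ε(M) = 1. -/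
/-!
Since `‖D^{1/2} 1‖² = 2m`, `𝓘` is the orthogonal projection onto the complement of `D^{1/2} 1`;
it is nonzero because its trace is `n - 1`. The exponential `exp S` of the symmetric matrix
`S = -2mε D^{-1/2} M D^{-1/2}` is `E²` with `E = exp (S / 2)` symmetric and invertible, so
`𝓘 • exp S = tr ((𝓘 E) (𝓘 E)ᵀ) > 0`, and `exp S` is positive semidefinite, hence so is its
congruence by `D^{-1/2}`. Finally `L(K_V) = (2m)⁻¹ D^{1/2} 𝓘 D^{1/2}`, and the congruences by
`D^{1/2}` and `D^{-1/2}` cancel inside the trace, so `L(K_V) • U = 𝓘 • exp S / 𝓘 • exp S = 1`.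
-/

open Finset Matrix

/-- The trace inner product `A • B = Tr(AᵀB)` of two square matrices. -/
noncomputable def frobDot {n : ℕ} (A B : Matrix (Fin n) (Fin n) ℝ) : ℝ :=
  (Aᵀ * B).trace

open scoped ComplexOrder

variable {ι : Type*} [Fintype ι] [DecidableEq ι]

namespace Matrix

section Exp

variable {𝕜 : Type*} [RCLike 𝕜]

theorem exp_half_mul_exp_half (S : Matrix ι ι 𝕜) :
    NormedSpace.exp ((2⁻¹ : ℝ) • S) * NormedSpace.exp ((2⁻¹ : ℝ) • S) = NormedSpace.exp S := by
  rw [← exp_add_of_commute _ _ (Commute.refl _), ← add_smul]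
  norm_num

theorem IsHermitian.posSemidef_exp {S : Matrix ι ι 𝕜} (hS : S.IsHermitian) :
    (NormedSpace.exp S).PosSemidef := by
  have hE : (NormedSpace.exp ((2⁻¹ : ℝ) • S)).IsHermitian := (hS.smul (.all _)).exp
  simpa only [hE.eq, exp_half_mul_exp_half] using
    posSemidef_self_mul_conjTranspose (NormedSpace.exp ((2⁻¹ : ℝ) • S))

end Exp

theorem trace_mul_exp_pos {P S : Matrix ι ι ℝ} (hP : P.IsHermitian) (hPP : IsIdempotentElem P)
    (hP0 : P ≠ 0) (hS : S.IsHermitian) : 0 < (P * NormedSpace.exp S).trace := by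
  set E := NormedSpace.exp ((2⁻¹ : ℝ) • S)
  have hE : E.IsHermitian := (hS.smul (.all _)).exp
  have hPE : P * E ≠ 0 := fun h => hP0 ((isUnit_exp _).mul_left_eq_zero.mp h)
  have htrace : (P * NormedSpace.exp S).trace = (P * E * (P * E)ᴴ).trace := by
    rw [conjTranspose_mul, hE.eq, hP.eq]
    calc (P * NormedSpace.exp S).trace = (P * P * (E * E)).trace := by
          rw [hPP.eq, exp_half_mul_exp_half]
      _ = (P * E * (E * P)).trace := by
          simp only [← Matrix.mul_assoc]
          rw [trace_mul_comm (P * E * E) P]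
          simp only [Matrix.mul_assoc]
  rw [htrace]
  exact (posSemidef_self_mul_conjTranspose _).trace_nonneg.lt_of_ne'
    (trace_mul_conjTranspose_self_eq_zero_iff.not.mpr hPE)

theorem diagonal_mul_vecMulVec_mul_diagonal {R : Type*} [CommSemiring R] (u v w x : ι → R) :
    diagonal u * vecMulVec v w * diagonal x = vecMulVec (u * v) (w * x) := by
  ext i j
  simp only [diagonal_mul, mul_diagonal, vecMulVec_apply, Pi.mul_apply]
  ring

section OrthogonalComplProj

variable {K : Type*} [Field K]

/-- The paper's `𝓘` is `orthogonalComplProj (D^{1/2} 1)`. -/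
def orthogonalComplProj (v : ι → K) : Matrix ι ι K :=
  1 - (v ⬝ᵥ v)⁻¹ • vecMulVec v v

theorem isSymm_orthogonalComplProj (v : ι → K) : (orthogonalComplProj v).IsSymm := by
  simp [orthogonalComplProj, IsSymm, transpose_sub, transpose_smul, transpose_vecMulVec]

theorem isIdempotentElem_orthogonalComplProj {v : ι → K} (hv : v ⬝ᵥ v ≠ 0) :
    IsIdempotentElem (orthogonalComplProj v) := by
  have : IsIdempotentElem ((v ⬝ᵥ v)⁻¹ • vecMulVec v v) := by
    rw [IsIdempotentElem, smul_mul_smul_comm, vecMulVec_mul_vecMulVec, vecMulVec_smul, smul_smul,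
      inv_mul_cancel_right₀ hv]
  exact this.one_sub

theorem trace_orthogonalComplProj {v : ι → K} (hv : v ⬝ᵥ v ≠ 0) :
    (orthogonalComplProj v).trace = Fintype.card ι - 1 := by
  rw [orthogonalComplProj, trace_sub, trace_one, trace_smul, trace_vecMulVec, smul_eq_mul,
    inv_mul_cancel₀ hv]

theorem orthogonalComplProj_ne_zero [CharZero K] {v : ι → K} (hv : v ⬝ᵥ v ≠ 0)
    (hι : 1 < Fintype.card ι) : orthogonalComplProj v ≠ 0 := by
  intro h
  have := trace_orthogonalComplProj hv
  rw [h, trace_zero, eq_comm, sub_eq_zero] at this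
  exact hι.ne' (by exact_mod_cast this)

theorem diagonal_transpose_mul_orthogonalComplProj_mul_diagonal (v : ι → K) :
    (diagonal v)ᵀ * orthogonalComplProj v * diagonal v =
      diagonal (v * v) - (v ⬝ᵥ v)⁻¹ • vecMulVec (v * v) (v * v) := by
  rw [orthogonalComplProj, diagonal_transpose, mul_sub, sub_mul, Matrix.mul_one,
    diagonal_mul_diagonal, ← Pi.mul_def, Matrix.mul_smul, Matrix.smul_mul,
    diagonal_mul_vecMulVec_mul_diagonal]

end OrthogonalComplProj

end Matrix

section FrobDot

variable {n : ℕ}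

theorem frobDot_smul_smul (a b : ℝ) (X Y : Matrix (Fin n) (Fin n) ℝ) :
    frobDot (a • X) (b • Y) = a * b * frobDot X Y := by
  simp only [frobDot, transpose_smul, smul_mul_smul_comm, trace_smul, smul_eq_mul]

theorem Matrix.IsSymm.frobDot_eq_trace_mul {X : Matrix (Fin n) (Fin n) ℝ} (hX : X.IsSymm)
    (Y : Matrix (Fin n) (Fin n) ℝ) : frobDot X Y = (X * Y).trace := by
  rw [frobDot, hX.eq]

theorem frobDot_congruence_of_mul_eq_one {W W' : Matrix (Fin n) (Fin n) ℝ} (h : W * W' = 1)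
    (X Y : Matrix (Fin n) (Fin n) ℝ) : frobDot (Wᵀ * X * W) (W' * Y * W'ᵀ) = frobDot X Y := by
  calc frobDot (Wᵀ * X * W) (W' * Y * W'ᵀ) = (Wᵀ * (Xᵀ * Y * W'ᵀ)).trace := by
        simp only [frobDot, transpose_mul, transpose_transpose, Matrix.mul_assoc]
        rw [← Matrix.mul_assoc W W', h, Matrix.one_mul]
    _ = frobDot X Y := by
        rw [trace_mul_comm, Matrix.mul_assoc, ← transpose_mul, h, transpose_one, Matrix.mul_one,
          frobDot]

theorem frobDot_orthogonalComplProj_exp_pos (hn : 2 ≤ n) {v : Fin n → ℝ} (hv : v ⬝ᵥ v ≠ 0)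
    {S : Matrix (Fin n) (Fin n) ℝ} (hS : S.IsHermitian) :
    0 < frobDot (orthogonalComplProj v) (NormedSpace.exp S) := by
  have hP := isSymm_orthogonalComplProj v
  rw [hP.frobDot_eq_trace_mul]
  exact trace_mul_exp_pos (isHermitian_iff_isSymm.mpr hP)
    (isIdempotentElem_orthogonalComplProj hv)
    (orthogonalComplProj_ne_zero hv (by rw [Fintype.card_fin]; omega)) hS

end FrobDot

theorem update_in_Delta_general {n : ℕ} (hn : 2 ≤ n)
    (d : Fin n → ℝ) (hd : ∀ i, 0 < d i)
    (m : ℝ) (hm : ∑ i, d i = 2 * m)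
    (μ : Fin n → ℝ) (hμ : ∀ i, μ i = d i / (2 * m))
    (LKV : Matrix (Fin n) (Fin n) ℝ)
    (hLKV : LKV = Matrix.diagonal μ - Matrix.vecMulVec μ μ)
    (Iproj : Matrix (Fin n) (Fin n) ℝ)
    (hIproj : Iproj = 1 - (1 / (2 * m)) •
      Matrix.vecMulVec (fun i => Real.sqrt (d i)) (fun i => Real.sqrt (d i)))
    (Dinvhalf : Matrix (Fin n) (Fin n) ℝ)
    (hDinvhalf : Dinvhalf = Matrix.diagonal (fun i => (Real.sqrt (d i))⁻¹))
    (ε : ℝ)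
    (M : Matrix (Fin n) (Fin n) ℝ) (hMsym : M.IsSymm)
    (A : Matrix (Fin n) (Fin n) ℝ)
    (hA : A = NormedSpace.exp (-((2 * m * ε) • (Dinvhalf * M * Dinvhalf))))
    (U : Matrix (Fin n) (Fin n) ℝ)
    (hU : U = ((2 * m) / frobDot Iproj A) • (Dinvhalf * A * Dinvhalf)) :
    0 < frobDot Iproj A ∧ U.PosSemidef ∧ frobDot LKV U = 1 := by
  set v : Fin n → ℝ := fun i => Real.sqrt (d i)
  have hvv : v * v = d := funext fun i => Real.mul_self_sqrt (hd i).le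
  have hdot : v ⬝ᵥ v = 2 * m := by rw [← hm, ← hvv]; rfl
  have hm0 : 0 < m := by
    have : 0 < ∑ i, d i := sum_pos (fun i _ => hd i) ⟨⟨0, by omega⟩, mem_univ _⟩
    linarith
  have hIproj' : Iproj = orthogonalComplProj v := by
    rw [hIproj, orthogonalComplProj, hdot, one_div]
  have hDinvH : Dinvhalfᴴ = Dinvhalf := by simp [hDinvhalf]
  have hS : (-((2 * m * ε) • (Dinvhalf * M * Dinvhalf))).IsHermitian := by
    have := isHermitian_mul_mul_conjTranspose Dinvhalf (isHermitian_iff_isSymm.mpr hMsym)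
    exact (hDinvH ▸ this).smul (.all _) |>.neg
  have hpos : 0 < frobDot Iproj A :=
    hIproj' ▸ hA ▸ frobDot_orthogonalComplProj_exp_pos hn (by rw [hdot]; positivity) hS
  refine ⟨hpos, ?_, ?_⟩
  · have hDAD := (hA ▸ hS.posSemidef_exp).mul_mul_conjTranspose_same Dinvhalf
    exact hU ▸ (hDinvH ▸ hDAD).smul (by positivity)
  · have hDD : diagonal v * Dinvhalf = 1 := by
      rw [hDinvhalf, diagonal_mul_diagonal, ← diagonal_one]
      exact congrArg diagonal (funext fun i => mul_inv_cancel₀ (Real.sqrt_pos.mpr (hd i)).ne')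
    have hL : LKV = (2 * m)⁻¹ • ((diagonal v)ᵀ * Iproj * diagonal v) := by
      have hμ' : μ = (2 * m)⁻¹ • d := funext fun i => by simp [hμ, div_eq_inv_mul]
      rw [hLKV, hIproj', diagonal_transpose_mul_orthogonalComplProj_mul_diagonal, hvv, hdot, hμ',
        diagonal_smul, smul_vecMulVec, vecMulVec_smul, smul_sub, smul_smul]
    have hU' : U = (2 * m / frobDot Iproj A) • (Dinvhalf * A * Dinvhalfᵀ) := by
      rw [hU, hDinvhalf, diagonal_transpose]
    rw [hL, hU', frobDot_smul_smul, frobDot_congruence_of_mul_eq_one hDD]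
    field_simp

/-- **Lemma 2.2 (lem:delta).** With `D = diag(d)` (`d_i > 0`, `∑ d_i = 2m`),
`μ_i = d_i/(2m)`, `L(K_V) = diag(μ) − μμᵀ`, and `𝓘 = I − (1/(2m))·D^{1/2}11ᵀD^{1/2}`,
for any `ε > 0` and symmetric `M`, the normalized matrix-exponential update
`U_ε(M) = 2m · D^{−1/2} exp(−2mε·D^{−1/2}MD^{−1/2}) D^{−1/2} / (𝓘 • exp(−2mε·D^{−1/2}MD^{−1/2}))`
has strictly positive denominator, is positive semidefinite, and satisfies
`L(K_V) • U_ε(M) = 1`; i.e. `U_ε(M) ∈ Δ`. -/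
theorem update_in_Delta {n : ℕ} (hn : 2 ≤ n)
    (d : Fin n → ℝ) (hd : ∀ i, 0 < d i)
    (m : ℝ) (hm : ∑ i, d i = 2 * m)
    (μ : Fin n → ℝ) (hμ : ∀ i, μ i = d i / (2 * m))
    (LKV : Matrix (Fin n) (Fin n) ℝ)
    (hLKV : LKV = Matrix.diagonal μ - Matrix.vecMulVec μ μ)
    (Iproj : Matrix (Fin n) (Fin n) ℝ)
    (hIproj : Iproj = 1 - (1 / (2 * m)) •
      Matrix.vecMulVec (fun i => Real.sqrt (d i)) (fun i => Real.sqrt (d i)))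
    (Dinvhalf : Matrix (Fin n) (Fin n) ℝ)
    (hDinvhalf : Dinvhalf = Matrix.diagonal (fun i => (Real.sqrt (d i))⁻¹))
    (ε : ℝ) (hε : 0 < ε)
    (M : Matrix (Fin n) (Fin n) ℝ) (hMsym : M.IsSymm)
    (A : Matrix (Fin n) (Fin n) ℝ)
    (hA : A = NormedSpace.exp (-((2 * m * ε) • (Dinvhalf * M * Dinvhalf))))
    (U : Matrix (Fin n) (Fin n) ℝ)
    (hU : U = ((2 * m) / frobDot Iproj A) • (Dinvhalf * A * Dinvhalf)) :
    0 < frobDot Iproj A ∧ U.PosSemidef ∧ frobDot LKV U = 1 :=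
  update_in_Delta_general hn d hd m hm μ hμ LKV hLKV Iproj hIproj Dinvhalf hDinvhalf ε M hMsym A hA
    U hU
end

section
/- For all real numbers y, z with y ≥ z, (y − z)² ≤ 2·(sgn(y)·y² − sgn(z)·z²). -/
/-! Since `sgn t * t ^ 2 = t * |t|`, the claim reads `(y - z)² ≤ 2 (y |y| - z |z|)`. When `y` and `z`
have the same sign, the difference of the two sides is `(y - z)(y + 3z)` or `(y - z)(-3y - z)`, a
product of nonnegative factors; when `z < 0 ≤ y` it is `(y + z)²`. -/

/-- The sign function of the paper: `sgn(t) = 1` if `t ≥ 0` and `−1` otherwise. -/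
noncomputable def sgn (t : ℝ) : ℝ := if 0 ≤ t then 1 else -1

theorem sgn_mul_sq (t : ℝ) : sgn t * t ^ 2 = t * |t| := by
  unfold sgn
  split_ifs with ht
  · rw [abs_of_nonneg ht]; ring
  · rw [abs_of_neg (not_le.mp ht)]; ring

theorem sq_sub_le_two_mul_sub_mul_abs {y z : ℝ} (h : z ≤ y) :
    (y - z) ^ 2 ≤ 2 * (y * |y| - z * |z|) := by
  have hyz : 0 ≤ y - z := sub_nonneg.mpr h
  rcases le_total 0 z with hz | hz
  · rw [abs_of_nonneg hz, abs_of_nonneg (hz.trans h)]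
    nlinarith [mul_nonneg hyz (by linarith : 0 ≤ y + 3 * z)]
  rcases le_total 0 y with hy | hy
  · rw [abs_of_nonpos hz, abs_of_nonneg hy]
    nlinarith [sq_nonneg (y + z)]
  · rw [abs_of_nonpos hz, abs_of_nonpos hy]
    nlinarith [mul_nonneg hyz (by linarith : 0 ≤ -(3 * y + z))]

/-- **Fact A.3 (fct:ab2).** For all reals `y ≥ z`,
`(y − z)² ≤ 2·(sgn(y)·y² − sgn(z)·z²)`. -/
theorem sq_sub_le_two_sgn_sq (y z : ℝ) (h : z ≤ y) :
    (y - z) ^ 2 ≤ 2 * (sgn y * y ^ 2 - sgn z * z ^ 2) := by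
  rw [sgn_mul_sq, sgn_mul_sq]
  exact sq_sub_le_two_mul_sub_mul_abs h
end

section
/- Let x : V → ℝ with vertices relabeled so that x_1 ≥ x_2 ≥ … ≥ x_n, and for 1 ≤ i ≤ n−1 let S_i = {1,…,i}. Suppose (1/m)·Σ_{{i,j}∈E} (x_i − x_j)² ≤ ε₁ and (1/(2m))·Σ_{i∈V} d_i x_i² ≤ ε₂ for some ε₁, ε₂ > 0, and suppose there are indices l < r and constants c, δ > 0 with vol({1,…,l}) ≥ 2cm, vol({r,…,n}) ≥ 2cm, and x_l − x_r ≥ δ. Then there exists i with l ≤ i ≤ r−1 such that φ(S_i) ≤ 2·√(ε₁·ε₂) / (c·δ²). -/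
/-!
Put `F u = x u * |x u|`; it is antitone along the vertex order. The discrete coarea formula
`∑ₖ (F k - F (k+1)) · |E(S_k, S̄_k)| = ∑_{uv ∈ E} |F u - F v|`, together with
`|F u - F v| ≤ |x u - x v| (|x u| + |x v|)` and Cauchy–Schwarz, bounds the weighted cut sum by
`2m √(ε₁ ε₂)`. For `l ≤ k < r` both sides of `S_k` have volume at least `2cm`, and the weights
`F k - F (k+1)` on this window are nonnegative with total `F l - F r ≥ δ² / 2`, so averaging
gives a window cut of conductance at most `2m √(ε₁ ε₂) / (2cm · δ²/2)`.
-/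

open Finset

/-- The sweep cut `S_i = {1,…,i}` containing all vertices up to and including `i`
(vertices relabeled so that `x` is nonincreasing). -/
def sweepLe {n : ℕ} (i : Fin n) : Finset (Fin n) := Finset.univ.filter (fun j => j ≤ i)

theorem monotone_mul_abs_self {R : Type*} [CommRing R] [LinearOrder R] [IsStrictOrderedRing R] :
    Monotone fun a : R => a * |a| := by
  intro a b hab
  rcases le_total 0 a with ha | ha <;> rcases le_total 0 b with hb | hb <;>
    simp only [abs_of_nonneg, abs_of_nonpos, *] <;> nlinarith

theorem sq_div_two_le_mul_abs_self_sub {K : Type*} [Field K] [LinearOrder K] [IsStrictOrderedRing K]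
    {a b δ : K} (hδ : 0 ≤ δ) (h : δ ≤ a - b) : δ ^ 2 / 2 ≤ a * |a| - b * |b| := by
  rcases le_total 0 a with ha | ha <;> rcases le_total 0 b with hb | hb <;>
    simp only [abs_of_nonneg, abs_of_nonpos, *] <;> nlinarith [sq_nonneg (a + b)]

theorem abs_mul_abs_self_sub_le {K : Type*} [Field K] [LinearOrder K] [IsStrictOrderedRing K]
    (a b : K) : abs (a * |a| - b * |b|) ≤ |a - b| * (|a| + |b|) := by
  have hdecomp :
      a * |a| - b * |b| = ((a - b) * (|a| + |b|) + (a + b) * (|a| - |b|)) / 2 := by ring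
  rw [hdecomp, abs_div, abs_two, div_le_iff₀ two_pos]
  calc |(a - b) * (|a| + |b|) + (a + b) * (|a| - |b|)|
      ≤ |a - b| * (|a| + |b|) + |a + b| * |(|a| - |b|)| := by
        refine (abs_add_le _ _).trans ?_
        rw [abs_mul, abs_mul, abs_of_nonneg (by positivity : 0 ≤ |a| + |b|)]
    _ ≤ |a - b| * (|a| + |b|) + (|a| + |b|) * |a - b| := by
        gcongr _ + ?_
        exact mul_le_mul (abs_add_le a b) (abs_abs_sub_abs_le_abs_sub a b) (abs_nonneg _)
          (by positivity)
    _ = |a - b| * (|a| + |b|) * 2 := by ring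

theorem Antitone.exists_nat_extension {α : Type*} [Preorder α] {n : ℕ} {F : Fin n → α}
    (hF : Antitone F) (hn : 0 < n) : ∃ f : ℕ → α, Antitone f ∧ ∀ k : Fin n, f k = F k :=
  ⟨fun k => F ⟨min k (n - 1), by omega⟩, fun a b h => hF (by simp only [Fin.mk_le_mk]; omega),
    fun k => congrArg F (Fin.ext (by simp only; omega))⟩

theorem Finset.exists_le_of_sum_mul_le {ι R : Type*} [CommRing R] [LinearOrder R]
    [IsStrictOrderedRing R] {s : Finset ι} {w a : ι → R} {t : R}
    (hw : ∀ i ∈ s, 0 ≤ w i) (hpos : 0 < ∑ i ∈ s, w i)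
    (h : ∑ i ∈ s, w i * a i ≤ t * ∑ i ∈ s, w i) : ∃ i ∈ s, a i ≤ t := by
  by_contra! hlt
  obtain ⟨i, hi, hwi⟩ : ∃ i ∈ s, 0 < w i :=
    exists_lt_of_sum_lt (by simpa using hpos : ∑ i ∈ s, (0 : R) < ∑ i ∈ s, w i)
  refine h.not_gt ?_
  rw [mul_sum]
  refine sum_lt_sum (fun j hj => ?_) ⟨i, hi, ?_⟩
  · nlinarith [hw j hj, hlt j hj]
  · nlinarith [hlt i hi]

theorem Fin.sum_Ico_sub_succ {M : Type*} [AddCommGroup M] {n : ℕ} (f : ℕ → M) {u v : Fin n}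
    (h : u ≤ v) : ∑ k ∈ Ico u v, (f k - f (k + 1)) = f u - f v := by
  calc ∑ k ∈ Ico u v, (f k - f (k + 1))
      = ∑ k ∈ Ico (u : ℕ) v, (f k - f (k + 1)) := by
        rw [← Fin.map_valEmbedding_Ico, sum_map]
        rfl
    _ = -∑ k ∈ Ico (u : ℕ) v, (f (k + 1) - f k) := by simp_rw [← sum_neg_distrib, neg_sub]
    _ = f u - f v := by rw [sum_Ico_sub f (Fin.le_def.1 h), neg_sub]

section Graph

variable {n : ℕ} (G : SimpleGraph (Fin n)) [DecidableRel G.Adj]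

theorem vol_mono {S T : Finset (Fin n)} (h : S ⊆ T) : vol G S ≤ vol G T :=
  sum_le_sum_of_subset h

theorem min_vol_le_min_vol_sweepLe {l r k : Fin n} (hk : k ∈ Ico l r) :
    min (vol G (univ.filter (· ≤ l))) (vol G (univ.filter (r ≤ ·))) ≤
      min (vol G (sweepLe k)) (vol G (sweepLe k)ᶜ) := by
  obtain ⟨hlk, hkr⟩ := mem_Ico.1 hk
  refine min_le_min (vol_mono G fun j => ?_) (vol_mono G fun j => ?_) <;>
    simp only [sweepLe, mem_compl, mem_filter, mem_univ, true_and, not_le]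
  exacts [fun h => h.trans hlk, hkr.trans_le]

theorem conductance_le_cutSize_div {S : Finset (Fin n)} {V₀ : ℝ} (hV₀ : 0 < V₀)
    (h : V₀ ≤ min (vol G S : ℝ) (vol G Sᶜ)) : conductance G S ≤ cutSize G S / V₀ :=
  div_le_div_of_nonneg_left (Nat.cast_nonneg _) hV₀ h

theorem cutSize_sweepLe (k : Fin n) :
    cutSize G (sweepLe k) = ∑ u, ∑ v, if G.Adj u v ∧ k ∈ Ico u v then 1 else 0 := by
  simp only [cutSize, sweepLe, compl_filter, sum_filter, not_le, mem_Ico]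
  refine sum_congr rfl fun u _ => ?_
  split_ifs with hu
  · exact sum_congr rfl fun v _ => by by_cases hv : k < v <;> simp [hu, hv]
  · exact (sum_eq_zero fun v _ => by simp [hu]).symm

/-- Discrete coarea formula for the sweep cuts. -/
theorem sum_mul_cutSize_sweepLe (f : ℕ → ℝ) :
    ∑ k : Fin n, (f k - f (k + 1)) * cutSize G (sweepLe k) =
      ∑ u, ∑ v, if G.Adj u v ∧ u < v then f u - f v else 0 := by
  simp_rw [cutSize_sweepLe, Nat.cast_sum, mul_sum]
  rw [sum_comm]
  refine sum_congr rfl fun u _ => ?_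
  rw [sum_comm]
  refine sum_congr rfl fun v _ => ?_
  by_cases hadj : G.Adj u v
  · rcases lt_or_ge u v with huv | hvu
    · simp only [hadj, huv, true_and, Nat.cast_ite, Nat.cast_one, Nat.cast_zero, mul_ite, mul_one,
        mul_zero, if_true]
      rw [← Fin.sum_Ico_sub_succ f huv.le, sum_ite_mem, univ_inter]
    · simp [hadj, hvu.not_gt, Ico_eq_empty_of_le hvu]
  · simp [hadj]

theorem edgeSum_nonneg {f : Fin n → Fin n → ℝ} (h : ∀ u v, G.Adj u v → 0 ≤ f u v) :
    0 ≤ edgeSum G f :=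
  div_nonneg (sum_nonneg fun u _ => sum_nonneg fun v _ => by
    split_ifs with hadj
    exacts [h u v hadj, le_rfl]) zero_le_two

theorem edgeSum_mono {f g : Fin n → Fin n → ℝ} (h : ∀ u v, G.Adj u v → f u v ≤ g u v) :
    edgeSum G f ≤ edgeSum G g := by
  unfold edgeSum
  gcongr with u _ v _
  split_ifs with hadj
  exacts [h u v hadj, le_rfl]

theorem edgeSum_eq_sum_adj_lt (g : Fin n → Fin n → ℝ) (hg : ∀ u v, g u v = g v u) :
    edgeSum G g = ∑ u, ∑ v, if G.Adj u v ∧ u < v then g u v else 0 := by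
  have hsplit : ∀ u v, (if G.Adj u v then g u v else 0) =
      (if G.Adj u v ∧ u < v then g u v else 0) + (if G.Adj v u ∧ v < u then g v u else 0) := by
    intro u v
    by_cases hadj : G.Adj u v
    · rcases lt_or_gt_of_ne (G.ne_of_adj hadj) with h | h
      · simp [hadj, h, h.not_gt]
      · simp [hadj, hadj.symm, h, h.not_gt, hg u v]
    · have hadj' : ¬G.Adj v u := fun h => hadj h.symm
      simp [hadj, hadj']
  rw [edgeSum, div_eq_iff two_ne_zero]
  simp_rw [hsplit, sum_add_distrib]
  rw [sum_comm (f := fun u v => if G.Adj v u ∧ v < u then g v u else 0)]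
  ring

theorem edgeSum_mul_le_sqrt_mul_sqrt (f g : Fin n → Fin n → ℝ) :
    edgeSum G (fun u v => f u v * g u v) ≤
      √(edgeSum G fun u v => f u v ^ 2) * √(edgeSum G fun u v => g u v ^ 2) := by
  set f' : Fin n × Fin n → ℝ := fun p => if G.Adj p.1 p.2 then f p.1 p.2 else 0
  set g' : Fin n × Fin n → ℝ := fun p => if G.Adj p.1 p.2 then g p.1 p.2 else 0
  have hfg : edgeSum G (fun u v => f u v * g u v) = (∑ p, f' p * g' p) / 2 := by
    rw [edgeSum, Fintype.sum_prod_type]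
    congr 1
    refine sum_congr rfl fun u _ => sum_congr rfl fun v _ => ?_
    split_ifs <;> simp [f', g', *]
  have hsq : ∀ h : Fin n → Fin n → ℝ, edgeSum G (fun u v => h u v ^ 2) =
      (∑ p : Fin n × Fin n, (if G.Adj p.1 p.2 then h p.1 p.2 else 0) ^ 2) / 2 := by
    intro h
    rw [edgeSum, Fintype.sum_prod_type]
    congr 1
    refine sum_congr rfl fun u _ => sum_congr rfl fun v _ => ?_
    split_ifs <;> simp [*]
  rw [hfg, hsq, hsq, Real.sqrt_div' _ zero_le_two, Real.sqrt_div' _ zero_le_two, div_mul_div_comm,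
    Real.mul_self_sqrt zero_le_two]
  gcongr
  exact Real.sum_mul_le_sqrt_mul_sqrt _ f' g'

theorem edgeSum_add_eq_sum_degree_mul (g : Fin n → ℝ) :
    edgeSum G (fun u v => g u + g v) = ∑ u, G.degree u * g u := by
  have hdeg : ∀ u, ∑ v, (if G.Adj u v then g u else 0) = G.degree u * g u := fun u => by
    rw [← sum_filter, sum_const, ← SimpleGraph.neighborFinset_eq_filter,
      SimpleGraph.card_neighborFinset_eq_degree, nsmul_eq_mul]
  have hswap : ∑ u, ∑ v, (if G.Adj u v then g v else 0) =
      ∑ u, ∑ v, (if G.Adj u v then g u else 0) := by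
    rw [sum_comm]
    simp_rw [G.adj_comm]
  simp_rw [edgeSum, ite_add_zero, sum_add_distrib, hswap, hdeg]
  ring

theorem edgeSum_abs_mul_abs_self_sub_le (x : Fin n → ℝ) :
    edgeSum G (fun u v => abs (x u * |x u| - x v * |x v|)) ≤
      √(edgeSum G fun u v => (x u - x v) ^ 2) * √(2 * ∑ u, G.degree u * x u ^ 2) := by
  calc edgeSum G (fun u v => abs (x u * |x u| - x v * |x v|))
      ≤ edgeSum G (fun u v => |x u - x v| * (|x u| + |x v|)) :=
        edgeSum_mono G fun u v _ => abs_mul_abs_self_sub_le (x u) (x v)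
    _ ≤ √(edgeSum G fun u v => |x u - x v| ^ 2) *
          √(edgeSum G fun u v => (|x u| + |x v|) ^ 2) :=
        edgeSum_mul_le_sqrt_mul_sqrt G _ _
    _ ≤ √(edgeSum G fun u v => (x u - x v) ^ 2) *
          √(edgeSum G fun u v => 2 * x u ^ 2 + 2 * x v ^ 2) := by
        simp_rw [sq_abs]
        gcongr
        exact edgeSum_mono G fun u v _ => by
          nlinarith [sq_abs (x u), sq_abs (x v), sq_nonneg (|x u| - |x v|)]
    _ = √(edgeSum G fun u v => (x u - x v) ^ 2) * √(2 * ∑ u, G.degree u * x u ^ 2) := by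
        rw [edgeSum_add_eq_sum_degree_mul G fun u => 2 * x u ^ 2, mul_sum]
        simp_rw [mul_left_comm]

theorem edgeSum_abs_mul_abs_self_sub_le_two_mul_sqrt (x : Fin n → ℝ) {m ε₁ ε₂ : ℝ}
    (hm : 0 ≤ m)
    (henergy : edgeSum G (fun u v => (x u - x v) ^ 2) ≤ m * ε₁)
    (hvar : ∑ u, G.degree u * x u ^ 2 ≤ 2 * m * ε₂) :
    edgeSum G (fun u v => abs (x u * |x u| - x v * |x v|)) ≤ 2 * m * √(ε₁ * ε₂) := by
  have hmε₁ : 0 ≤ m * ε₁ := (edgeSum_nonneg G fun u v _ => sq_nonneg _).trans henergy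
  calc _ ≤ √(edgeSum G fun u v => (x u - x v) ^ 2) * √(2 * ∑ u, G.degree u * x u ^ 2) :=
        edgeSum_abs_mul_abs_self_sub_le G x
    _ ≤ √(m * ε₁) * √(4 * m * ε₂) := by
        gcongr √?_ * √?_
        linarith
    _ = 2 * m * √(ε₁ * ε₂) := by
        rw [← Real.sqrt_mul hmε₁,
          show m * ε₁ * (4 * m * ε₂) = (2 * m) ^ 2 * (ε₁ * ε₂) by ring,
          Real.sqrt_mul (sq_nonneg _), Real.sqrt_sq (by positivity)]

theorem exists_mem_Ico_conductance_sweepLe_le {F : Fin n → ℝ} (hF : Antitone F) {l r : Fin n}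
    (hgap : F r < F l) {V₀ : ℝ} (hV₀ : 0 < V₀)
    (hvol : ∀ k ∈ Ico l r, V₀ ≤ min (vol G (sweepLe k) : ℝ) (vol G (sweepLe k)ᶜ)) :
    ∃ k ∈ Ico l r,
      conductance G (sweepLe k) ≤ edgeSum G (fun u v => |F u - F v|) / (V₀ * (F l - F r)) := by
  obtain ⟨f, hf, hfF⟩ := hF.exists_nat_extension l.pos
  have hw : ∀ k : Fin n, 0 ≤ f k - f (k + 1) := fun k => sub_nonneg.2 (hf k.val.le_succ)
  have hsum : ∑ k ∈ Ico l r, (f k - f (k + 1)) = F l - F r := by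
    rw [Fin.sum_Ico_sub_succ f (hF.reflect_lt hgap).le, hfF, hfF]
  have hcut : ∑ k ∈ Ico l r, (f k - f (k + 1)) * cutSize G (sweepLe k) ≤
      edgeSum G (fun u v => |F u - F v|) := calc
    _ ≤ ∑ k : Fin n, (f k - f (k + 1)) * cutSize G (sweepLe k) :=
        sum_le_sum_of_subset_of_nonneg (subset_univ _) fun k _ _ =>
          mul_nonneg (hw k) (Nat.cast_nonneg _)
    _ = ∑ u, ∑ v, if G.Adj u v ∧ u < v then f u - f v else 0 := sum_mul_cutSize_sweepLe G f
    _ ≤ ∑ u, ∑ v, if G.Adj u v ∧ u < v then |F u - F v| else 0 := by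
        gcongr with u _ v _
        split_ifs
        · rw [hfF, hfF]
          exact le_abs_self _
        · exact le_rfl
    _ = edgeSum G (fun u v => |F u - F v|) :=
        (edgeSum_eq_sum_adj_lt G _ fun u v => abs_sub_comm _ _).symm
  refine exists_le_of_sum_mul_le (fun k _ => hw k) (hsum ▸ sub_pos.2 hgap) ?_
  calc ∑ k ∈ Ico l r, (f k - f (k + 1)) * conductance G (sweepLe k)
      ≤ ∑ k ∈ Ico l r, (f k - f (k + 1)) * cutSize G (sweepLe k) / V₀ := by
        refine sum_le_sum fun k hk => ?_
        rw [mul_div_assoc]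
        exact mul_le_mul_of_nonneg_left (conductance_le_cutSize_div G hV₀ (hvol k hk)) (hw k)
    _ ≤ edgeSum G (fun u v => |F u - F v|) / V₀ := by
        rw [← sum_div]
        gcongr
    _ = _ := by
        rw [hsum]
        field_simp [(sub_pos.2 hgap).ne']

end Graph

theorem balanced_sweep_cut_general {n : ℕ}
    (G : SimpleGraph (Fin n)) [DecidableRel G.Adj]
    (m : ℕ) (hm1 : 1 ≤ m)
    (x : Fin n → ℝ)
    (hsorted : ∀ i j : Fin n, i ≤ j → x j ≤ x i)
    (ε₁ ε₂ : ℝ)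
    (henergy : (1 / (m : ℝ)) * edgeSum G (fun i j => (x i - x j) ^ 2) ≤ ε₁)
    (hvar : (1 / (2 * (m : ℝ))) * ∑ i, (G.degree i : ℝ) * x i ^ 2 ≤ ε₂)
    (l r : Fin n)
    (c δ : ℝ) (hc : 0 < c) (hδ : 0 < δ)
    (hvolL : 2 * c * m ≤ (vol G (Finset.univ.filter (fun j => j ≤ l)) : ℝ))
    (hvolR : 2 * c * m ≤ (vol G (Finset.univ.filter (fun j => r ≤ j)) : ℝ))
    (hgap : δ ≤ x l - x r) :
    ∃ i : Fin n, l ≤ i ∧ i < r ∧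
      conductance G (sweepLe i) ≤ 2 * Real.sqrt (ε₁ * ε₂) / (c * δ ^ 2) := by
  have hm : (0 : ℝ) < m := by exact_mod_cast hm1
  rw [one_div, inv_mul_le_iff₀ hm] at henergy
  rw [one_div, inv_mul_le_iff₀ (by positivity)] at hvar
  set F : Fin n → ℝ := fun u => x u * |x u|
  have hF : Antitone F := monotone_mul_abs_self.comp_antitone hsorted
  have hgapF : δ ^ 2 / 2 ≤ F l - F r := sq_div_two_le_mul_abs_self_sub hδ.le hgap
  have hE : edgeSum G (fun u v => |F u - F v|) ≤ 2 * m * √(ε₁ * ε₂) :=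
    edgeSum_abs_mul_abs_self_sub_le_two_mul_sqrt G x hm.le henergy hvar
  have hvol : ∀ k ∈ Ico l r,
      2 * c * m ≤ min (vol G (sweepLe k) : ℝ) (vol G (sweepLe k)ᶜ) :=
    fun k hk => (le_min hvolL hvolR).trans (by exact_mod_cast min_vol_le_min_vol_sweepLe G hk)
  obtain ⟨k, hk, hcond⟩ := exists_mem_Ico_conductance_sweepLe_le G hF
    (by linarith [pow_pos hδ 2]) (by positivity) hvol
  refine ⟨k, (mem_Ico.1 hk).1, (mem_Ico.1 hk).2, hcond.trans ?_⟩
  calc edgeSum G (fun u v => |F u - F v|) / (2 * c * m * (F l - F r))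
      ≤ 2 * m * √(ε₁ * ε₂) / (2 * c * m * (δ ^ 2 / 2)) := by gcongr
    _ = 2 * √(ε₁ * ε₂) / (c * δ ^ 2) := by field_simp

/-- **Deterministic core of Theorem 2.3 (Rounding Roundable Embeddings).**
If the one-dimensional embedding `x` (sorted nonincreasingly) has edge energy
`(1/m)·∑_{{i,j}∈E}(x_i−x_j)² ≤ ε₁`, variance `(1/(2m))·∑ d_i x_i² ≤ ε₂`, and there are
indices `l < r` with `vol({1,…,l}) ≥ 2cm`, `vol({r,…,n}) ≥ 2cm`, and `x_l − x_r ≥ δ`,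
then some sweep cut `S_i` with `l ≤ i ≤ r−1` has conductance at most
`2·√(ε₁·ε₂)/(c·δ²)`. -/
theorem balanced_sweep_cut {n : ℕ}
    (G : SimpleGraph (Fin n)) [DecidableRel G.Adj]
    (m : ℕ) (hm : m = G.edgeFinset.card) (hm1 : 1 ≤ m)
    (hdeg : ∀ i, 0 < G.degree i)
    (x : Fin n → ℝ)
    (hsorted : ∀ i j : Fin n, i ≤ j → x j ≤ x i)
    (ε₁ ε₂ : ℝ) (hε₁ : 0 < ε₁) (hε₂ : 0 < ε₂)
    (henergy : (1 / (m : ℝ)) * edgeSum G (fun i j => (x i - x j) ^ 2) ≤ ε₁)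
    (hvar : (1 / (2 * (m : ℝ))) * ∑ i, (G.degree i : ℝ) * x i ^ 2 ≤ ε₂)
    (l r : Fin n) (hlr : l < r)
    (c δ : ℝ) (hc : 0 < c) (hδ : 0 < δ)
    (hvolL : 2 * c * m ≤ (vol G (Finset.univ.filter (fun j => j ≤ l)) : ℝ))
    (hvolR : 2 * c * m ≤ (vol G (Finset.univ.filter (fun j => r ≤ j)) : ℝ))
    (hgap : δ ≤ x l - x r) :
    ∃ i : Fin n, l ≤ i ∧ i < r ∧
      conductance G (sweepLe i) ≤ 2 * Real.sqrt (ε₁ * ε₂) / (c * δ ^ 2) :=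
  balanced_sweep_cut_general G m hm1 x hsorted ε₁ ε₂ henergy hvar l r c δ hc hδ hvolL hvolR hgap
end
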